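/- Surrogate-index identification: if (i) Y(w) ⟂ W | X, S(w), G=o (latent unconfoundedness through the surrogate) and (ii) consistency holds, then E[Y(w) | X, G=o] = E[ E[Y | W=w, X, S, G=o] | evaluated at S ∼ law of S(w) given X ], i.e., the mean long-term potential outcome is obtained by integrating the regression E[Y | W=w, X, S=s, G=o] against the conditional distribution of S(w) given X. -/

import Mathlib

/-!
On the event `W = w` consistency turns `Y` into `Y(w)` and `S` into `S(w)`, so the regression
`E[Y | W=w, X=x, S=s, G=o]` is `E[Y(w) | W=w, X=x, S(w)=s, G=o]`, which latent unconfoundedness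
identifies with `E[Y(w) | X=x, S(w)=s, G=o]`. Averaging the latter over `S(w)` given `X=x, G=o`
gives back `E[Y(w) | X=x, G=o]` by the tower property for conditioning on the fibres of the
countably-valued map `S(w)`.
-/

open MeasureTheory Set
open scoped ENNReal

/-- Conditional expectation of `f` given the event `A`. -/
noncomputable def cexp {Ω : Type*} [MeasurableSpace Ω] (μ : Measure Ω)
    (f : Ω → ℝ) (A : Set Ω) : ℝ :=
  (∫ ω in A, f ω ∂μ) / (μ A).toReal

lemma eqOn_ite_of_consistency {Ω α : Type*} {W : Ω → ℝ} {V V0 V1 : Ω → α} {w : ℝ}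
    (hw : w = 0 ∨ w = 1) (hcons : ∀ ω, (W ω = 1 → V ω = V1 ω) ∧ (W ω = 0 → V ω = V0 ω)) :
    EqOn V (if w = 1 then V1 else V0) {ω | W ω = w} := by
  rcases hw with rfl | rfl
  · rw [if_neg zero_ne_one]
    exact fun ω hω => (hcons ω).2 hω
  · rw [if_pos rfl]
    exact fun ω hω => (hcons ω).1 hω

section cexp

variable {Ω : Type*} [MeasurableSpace Ω]

lemma cexp_mul_measureReal (μ : Measure Ω) (f : Ω → ℝ) {A : Set Ω} (hA : μ A ≠ ∞) :
    cexp μ f A * μ.real A = ∫ ω in A, f ω ∂μ := by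
  rcases eq_or_ne (μ A) 0 with h0 | h0
  · simp [Measure.real, h0, Measure.restrict_eq_zero.mpr h0]
  · exact div_mul_cancel₀ _ (ENNReal.toReal_ne_zero.mpr ⟨h0, hA⟩)

lemma cexp_restrict (μ : Measure Ω) (f : Ω → ℝ) {A B : Set Ω} (hB : MeasurableSet B) :
    cexp (μ.restrict A) f B = cexp μ f (B ∩ A) := by
  rw [cexp, cexp, Measure.restrict_restrict hB, Measure.restrict_apply hB]

lemma cexp_congr_of_eqOn (μ : Measure Ω) {f g : Ω → ℝ} {A B : Set Ω} (hB : MeasurableSet B)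
    (hAB : A ⊆ B) (hfg : EqOn f g B) : cexp μ f A = cexp μ g A := by
  rw [cexp, cexp, integral_congr_ae
    (ae_mono (Measure.restrict_mono hAB le_rfl) (ae_restrict_of_forall_mem hB hfg))]

variable {𝒮 : Type*} [MeasurableSpace 𝒮] [Countable 𝒮] [MeasurableSingletonClass 𝒮]

lemma MeasureTheory.Measure.sum_restrict_preimage_singleton (ν : Measure Ω) {T : Ω → 𝒮}
    (hT : Measurable T) : Measure.sum (fun s => ν.restrict (T ⁻¹' {s})) = ν := by
  rw [← Measure.restrict_iUnion (pairwise_disjoint_fiber T)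
    (fun s => hT (measurableSet_singleton s)), ← preimage_iUnion, iUnion_of_singleton,
    preimage_univ, Measure.restrict_univ]

theorem integral_cexp_preimage_singleton (ν : Measure Ω) [IsFiniteMeasure ν] {f : Ω → ℝ}
    (hf : Integrable f ν) {T : Ω → 𝒮} (hT : Measurable T) :
    ∫ ω, cexp ν f (T ⁻¹' {T ω}) ∂ν = ∫ ω, f ω ∂ν := by
  set g : Ω → ℝ := fun ω => cexp ν f (T ⁻¹' {T ω})
  have hfiber : ∀ s, EqOn g (fun _ => cexp ν f (T ⁻¹' {s})) (T ⁻¹' {s}) := by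
    rintro s ω (rfl : T ω = s)
    rfl
  have hmeas : ∀ s, MeasurableSet (T ⁻¹' {s}) := fun s => hT (measurableSet_singleton s)
  have hint_fiber : ∀ s, ∫ ω in T ⁻¹' {s}, g ω ∂ν = ∫ ω in T ⁻¹' {s}, f ω ∂ν := fun s => by
    rw [setIntegral_congr_fun (hmeas s) (hfiber s), setIntegral_const, smul_eq_mul, mul_comm,
      cexp_mul_measureReal ν f (measure_ne_top ν _)]
  have hnorm_fiber : ∀ s, ∫ ω in T ⁻¹' {s}, ‖g ω‖ ∂ν ≤ ∫ ω in T ⁻¹' {s}, ‖f ω‖ ∂ν := fun s =>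
    calc ∫ ω in T ⁻¹' {s}, ‖g ω‖ ∂ν = ‖∫ ω in T ⁻¹' {s}, g ω ∂ν‖ := by
          rw [setIntegral_congr_fun (hmeas s) (fun ω hω => congrArg norm (hfiber s hω)),
            setIntegral_congr_fun (hmeas s) (hfiber s), setIntegral_const, setIntegral_const,
            norm_smul, Real.norm_of_nonneg measureReal_nonneg, smul_eq_mul]
      _ = ‖∫ ω in T ⁻¹' {s}, f ω ∂ν‖ := by rw [hint_fiber s]
      _ ≤ ∫ ω in T ⁻¹' {s}, ‖f ω‖ ∂ν := norm_integral_le_integral_norm f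
  rw [← Measure.sum_restrict_preimage_singleton ν hT] at hf ⊢
  have hg : Integrable g (Measure.sum fun s => ν.restrict (T ⁻¹' {s})) :=
    integrable_sum_measure
      (fun s => (integrableOn_const (measure_ne_top ν _)).congr_fun (hfiber s).symm (hmeas s))
      (hf.summable_integral.of_nonneg_of_le (fun s => integral_nonneg fun _ => norm_nonneg _)
        hnorm_fiber)
  rw [integral_sum_measure hg, integral_sum_measure hf]
  exact tsum_congr hint_fiber

end cexp

theorem surrogate_index_identification_general
    {Ω 𝒳 𝒮 : Type*} [MeasurableSpace Ω] [MeasurableSpace 𝒮]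
    [Countable 𝒮] [MeasurableSingletonClass 𝒮]
    (μ : Measure Ω) [IsProbabilityMeasure μ]
    (W Y Y0 Y1 : Ω → ℝ) (S S0 S1 : Ω → 𝒮) (X : Ω → 𝒳) (G : Ω → Bool) (x : 𝒳)
    (w : ℝ) (hw : w = 0 ∨ w = 1)
    (Yw : Ω → ℝ) (hYw : Yw = if w = 1 then Y1 else Y0)
    (Sw : Ω → 𝒮) (hSw : Sw = if w = 1 then S1 else S0)
    (hWm : Measurable W)
    (hS0m : Measurable S0) (hS1m : Measurable S1)
    (hY0i : Integrable Y0 μ) (hY1i : Integrable Y1 μ)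
    -- (ii) consistency: Y = Y(W), S = S(W)
    (hconsY : ∀ ω, (W ω = 1 → Y ω = Y1 ω) ∧ (W ω = 0 → Y ω = Y0 ω))
    (hconsS : ∀ ω, (W ω = 1 → S ω = S1 ω) ∧ (W ω = 0 → S ω = S0 ω))
    -- (i) latent unconfoundedness: Y(w) ⟂ W | X, S(w), G=o (mean form)
    (hLU : ∀ s : 𝒮,
      cexp μ Yw {ω | W ω = w ∧ X ω = x ∧ Sw ω = s ∧ G ω = true}
        = cexp μ Yw {ω | X ω = x ∧ Sw ω = s ∧ G ω = true}) :
    cexp μ Yw {ω | X ω = x ∧ G ω = true}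
      = cexp μ (fun ω =>
          cexp μ Y {ω' | W ω' = w ∧ X ω' = x ∧ S ω' = Sw ω ∧ G ω' = true})
        {ω | X ω = x ∧ G ω = true} := by
  have hYeq : EqOn Y Yw {ω | W ω = w} := hYw ▸ eqOn_ite_of_consistency hw hconsY
  have hSeq : EqOn S Sw {ω | W ω = w} := hSw ▸ eqOn_ite_of_consistency hw hconsS
  have hSwm : Measurable Sw := by rw [hSw]; split_ifs <;> assumption
  have hYwi : Integrable Yw μ := by rw [hYw]; split_ifs <;> assumption
  have hregression : ∀ s, cexp μ Y {ω | W ω = w ∧ X ω = x ∧ S ω = s ∧ G ω = true}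
      = cexp (μ.restrict {ω | X ω = x ∧ G ω = true}) Yw (Sw ⁻¹' {s}) := by
    intro s
    have hevent : {ω | W ω = w ∧ X ω = x ∧ S ω = s ∧ G ω = true}
        = {ω | W ω = w ∧ X ω = x ∧ Sw ω = s ∧ G ω = true} :=
      Set.ext fun ω => and_congr_right fun hW => by rw [hSeq hW]
    rw [hevent, cexp_congr_of_eqOn μ (hWm (measurableSet_singleton w)) (fun ω h => h.1) hYeq,
      hLU s, cexp_restrict μ Yw (hSwm (measurableSet_singleton s))]
    congr 1
    ext ω
    exact ⟨fun ⟨hX, hS, hG⟩ => ⟨hS, hX, hG⟩, fun ⟨hS, hX, hG⟩ => ⟨hX, hS, hG⟩⟩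
  simp_rw [hregression]
  exact congrArg (· / _) (integral_cexp_preimage_singleton _ hYwi.restrict hSwm).symm

/-- Surrogate-index identification (`G = true` encodes `o`). If
(i) `Y(w) ⟂ W | X, S(w), G=o` (latent unconfoundedness through the surrogate, here in
mean form) and (ii) consistency holds, then the mean long-term potential outcome is
obtained by integrating the regression `E[Y | W=w, X=x, S=s, G=o]` against the
conditional distribution of `S(w)` given `X = x` (in the observational group):
`E[Y(w) | X=x, G=o] = E[ E[Y | W=w, X=x, S = S(w), G=o] | X=x, G=o ]`. -/
theorem surrogate_index_identification
    {Ω 𝒳 𝒮 : Type*} [MeasurableSpace Ω] [MeasurableSpace 𝒳] [MeasurableSpace 𝒮]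
    [Countable 𝒮] [MeasurableSingletonClass 𝒮]
    (μ : Measure Ω) [IsProbabilityMeasure μ]
    (W Y Y0 Y1 : Ω → ℝ) (S S0 S1 : Ω → 𝒮) (X : Ω → 𝒳) (G : Ω → Bool) (x : 𝒳)
    (w : ℝ) (hw : w = 0 ∨ w = 1)
    (Yw : Ω → ℝ) (hYw : Yw = if w = 1 then Y1 else Y0)
    (Sw : Ω → 𝒮) (hSw : Sw = if w = 1 then S1 else S0)
    (hWm : Measurable W) (hY0m : Measurable Y0) (hY1m : Measurable Y1)
    (hS0m : Measurable S0) (hS1m : Measurable S1)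
    (hXm : Measurable X) (hGm : Measurable G)
    (hY0i : Integrable Y0 μ) (hY1i : Integrable Y1 μ)
    -- binary treatment
    (hWbin : ∀ ω, W ω = 0 ∨ W ω = 1)
    -- (ii) consistency: Y = Y(W), S = S(W)
    (hconsY : ∀ ω, (W ω = 1 → Y ω = Y1 ω) ∧ (W ω = 0 → Y ω = Y0 ω))
    (hconsS : ∀ ω, (W ω = 1 → S ω = S1 ω) ∧ (W ω = 0 → S ω = S0 ω))
    -- positivity
    (hposXG : 0 < μ {ω | X ω = x ∧ G ω = true})
    (hposW : ∀ s : 𝒮, 0 < μ {ω | X ω = x ∧ Sw ω = s ∧ G ω = true} →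
      0 < μ {ω | W ω = w ∧ X ω = x ∧ Sw ω = s ∧ G ω = true})
    -- (i) latent unconfoundedness: Y(w) ⟂ W | X, S(w), G=o (mean form)
    (hLU : ∀ s : 𝒮,
      cexp μ Yw {ω | W ω = w ∧ X ω = x ∧ Sw ω = s ∧ G ω = true}
        = cexp μ Yw {ω | X ω = x ∧ Sw ω = s ∧ G ω = true}) :
    cexp μ Yw {ω | X ω = x ∧ G ω = true}
      = cexp μ (fun ω =>
          cexp μ Y {ω' | W ω' = w ∧ X ω' = x ∧ S ω' = Sw ω ∧ G ω' = true})
        {ω | X ω = x ∧ G ω = true} :=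
  surrogate_index_identification_general μ W Y Y0 Y1 S S0 S1 X G x w hw Yw hYw Sw hSw hWm hS0m hS1m
    hY0i hY1i hconsY hconsS hLU
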